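/- Under Assumptions 1–5, the remainder R_n(θ) of the quadratic expansion of Q_n(θ) := −(n/2) m̄_n(θ)ᵀ W_n(θ)^{-1} m̄_n(θ) around θ_⋆ satisfies: for each ε > 0 there exist a sufficiently small δ > 0 and a sufficiently large h > 0 such that limsup_{n→∞} P_0^{(n)}[ sup_{h/√n ≤ ‖θ−θ_⋆‖ ≤ δ} |R_n(θ)| / (1 + n‖θ−θ_⋆‖²) > ε ] < ε, and limsup_{n→∞} P_0^{(n)}[ sup_{‖θ−θ_⋆‖ ≤ h/√n} |R_n(θ)| > ε ] = 0. -/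

import Mathlib

open MeasureTheory Filter Matrix
open scoped Topology ENNReal NNReal BigOperators

noncomputable section

namespace QPaper

abbrev Vec (d : ℕ) := EuclideanSpace ℝ (Fin d)
abbrev Mat (d : ℕ) := Matrix (Fin d) (Fin d) ℝ

variable {d : ℕ} {Ω : Type*} [MeasurableSpace Ω]

/-- The bilinear form `xᵀ A y`. -/
def quadForm (A : Mat d) (x y : Vec d) : ℝ := ∑ i, ∑ j, x i * A i j * y j

/-- The continuous linear map on Euclidean space induced by a matrix. -/
def matCLM (A : Mat d) : Vec d →L[ℝ] Vec d :=
  LinearMap.toContinuousLinearMap (Matrix.toEuclideanLin A)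

/-- Density at `x` of the centred Gaussian on `ℝ^d` with *precision* matrix `prec`,
i.e. the density `N(x; 0, prec⁻¹)`. -/
def gaussPDF (prec : Mat d) (x : Vec d) : ℝ :=
  (2 * Real.pi) ^ (-(d : ℝ) / 2) * Real.sqrt prec.det * Real.exp (-quadForm prec x x / 2)

/-- The centred Gaussian measure on `ℝ^d` with precision matrix `prec`. -/
def gaussMeasure (prec : Mat d) : Measure (Vec d) :=
  volume.withDensity fun x => ENNReal.ofReal (gaussPDF prec x)

/-- `X n → 0` in probability under the sequence of laws `P n` (i.e. `X n = o_p(1)`). -/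
def TendstoInProb (P : ℕ → Measure Ω) (X : ℕ → Ω → ℝ) : Prop :=
  ∀ ε : ℝ, 0 < ε → Tendsto (fun n => P n {ω | ε ≤ |X n ω|}) atTop (𝓝 0)

/-- `X n` is bounded in probability under the laws `P n` (i.e. `X n = O_p(1)`). -/
def BoundedInProb (P : ℕ → Measure Ω) (X : ℕ → Ω → ℝ) : Prop :=
  ∀ ε : ℝ, 0 < ε → ∃ M : ℝ, 0 < M ∧
    ∀ᶠ n in atTop, P n {ω | M ≤ |X n ω|} ≤ ENNReal.ofReal ε

/-- Convergence in distribution of `X n` (under the law `P n`) to the measure `μ`. -/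
def TendstoInDist (P : ℕ → Measure Ω) (X : ℕ → Ω → Vec d) (μ : Measure (Vec d)) : Prop :=
  ∀ f : BoundedContinuousFunction (Vec d) ℝ,
    Tendsto (fun n => ∫ ω, f (X n ω) ∂P n) atTop (𝓝 (∫ x, f x ∂μ))

/-- The criterion `Q_n(θ) = (1/2) m̄_n(θ)ᵀ W_n(θ)⁻¹ m̄_n(θ)`. -/
def Qcrit (Wn : Vec d → Mat d) (mb : Vec d → Vec d) (θ : Vec d) : ℝ :=
  (1 / 2) * quadForm (Wn θ)⁻¹ (mb θ) (mb θ)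

/-- The unnormalised Q-posterior kernel `|W_n(θ)|^{-1/2} e^{-n Q_n(θ)} π(θ)`. -/
def QKernel (Wn : Vec d → Mat d) (mb : Vec d → Vec d) (pr : Vec d → ℝ) (n : ℕ)
    (θ : Vec d) : ℝ :=
  (Real.sqrt (Wn θ).det)⁻¹ * Real.exp (-(n : ℝ) * Qcrit Wn mb θ) * pr θ

/-- The Q-posterior density `π(θ ∣ 𝒬_n)`. -/
def QPostDens (Θ : Set (Vec d)) (Wn : Vec d → Mat d) (mb : Vec d → Vec d) (pr : Vec d → ℝ)
    (n : ℕ) (θ : Vec d) : ℝ :=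
  QKernel Wn mb pr n θ / ∫ ϑ in Θ, QKernel Wn mb pr n ϑ

/-- The sandwich matrix `Δ(θ) = H(θ)ᵀ W(θ)⁻¹ H(θ)`. -/
def sandwich (W H : Vec d → Mat d) (θ : Vec d) : Mat d := (H θ)ᵀ * (W θ)⁻¹ * H θ

/-- Assumption 1 of the paper: uniform LLN for the score, an interior root `θ⋆` of the
limit score `m`, smoothness of `m` near `θ⋆` with derivative `-H`, invertibility of
`H(θ⋆)`, a CLT for `√n m̄_n(θ⋆)` with positive-definite asymptotic variance `I⋆`, and
stochastic equicontinuity of the score process. -/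
structure Assumption1 (P : ℕ → Measure Ω) (Θ : Set (Vec d))
    (mbar : ℕ → Ω → Vec d → Vec d) (m : Vec d → Vec d) (θstar : Vec d)
    (H : Vec d → Mat d) (Istar : Mat d) : Prop where
  unif_lln : ∀ ε : ℝ, 0 < ε →
    Tendsto (fun n => P n {ω | ∃ θ ∈ Θ, ε ≤ ‖mbar n ω θ - m θ‖}) atTop (𝓝 0)
  mem_interior : θstar ∈ interior Θ
  is_root : m θstar = 0
  smooth : ∃ δ : ℝ, 0 < δ ∧
    (∀ θ : Vec d, ‖θ - θstar‖ ≤ δ → HasFDerivAt m (-matCLM (H θ)) θ) ∧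
    ContinuousOn H {θ | ‖θ - θstar‖ ≤ δ}
  Hstar_inv : IsUnit (H θstar).det
  Istar_posdef : Istar.PosDef
  clt : TendstoInDist P (fun n ω => Real.sqrt n • mbar n ω θstar) (gaussMeasure Istar⁻¹)
  equicont : ∀ ε : ℝ, 0 < ε → ∃ δ : ℝ, 0 < δ ∧
    limsup (fun n => P n {ω | ∃ θ : Vec d, ‖θ - θstar‖ < δ ∧
        ε ≤ Real.sqrt n * ‖mbar n ω θ - mbar n ω θstar - (m θ - m θstar)‖ /
            (1 + Real.sqrt n * ‖θ - θstar‖)}) atTop < ENNReal.ofReal ε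

/-- Assumption 2 of the paper: regularity of the random weight matrices `W_n` and of
their uniform-in-probability limit `W`, together with the identification condition. -/
structure Assumption2 (P : ℕ → Measure Ω) (Θ : Set (Vec d))
    (Wn : ℕ → Ω → Vec d → Mat d) (W : Vec d → Mat d)
    (m : Vec d → Vec d) (θstar : Vec d) : Prop where
  regular : ∃ δ : ℝ, 0 < δ ∧
    (∀ᶠ n in atTop, ∀ ω : Ω, (∀ θ ∈ Θ, (Wn n ω θ).PosSemidef) ∧
      ∀ θ : Vec d, ‖θ - θstar‖ ≤ δ → (Wn n ω θ).PosDef) ∧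
    (∀ θ ∈ Θ, (W θ).PosSemidef) ∧
    (∀ ε : ℝ, 0 < ε →
      Tendsto (fun n => P n {ω | ∃ θ ∈ Θ, ∃ i j, ε ≤ |Wn n ω θ i j - W θ i j|})
        atTop (𝓝 0)) ∧
    ContinuousOn W {θ | ‖θ - θstar‖ ≤ δ} ∧
    ∀ θ : Vec d, ‖θ - θstar‖ ≤ δ → (W θ).PosDef
  ident : ∀ ε : ℝ, 0 < ε → ∃ c : ℝ, 0 < c ∧
    ∀ θ ∈ Θ, ε ≤ ‖θ - θstar‖ → c ≤ quadForm (W θ)⁻¹ (m θ) (m θ)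

/-- Assumption 3 of the paper: regularity and moment conditions on the prior `pr`. -/
structure Assumption3 (Θ : Set (Vec d)) (Wn : ℕ → Ω → Vec d → Mat d)
    (pr : Vec d → ℝ) (θstar : Vec d) : Prop where
  prior_pos : 0 < pr θstar
  prior_cont : ContinuousOn pr Θ
  moments : ∃ p : ℝ, 1 ≤ p ∧
    IntegrableOn (fun θ => ‖θ‖ ^ p * pr θ) Θ ∧
    ∀ᶠ n in atTop, ∀ ω : Ω,
      IntegrableOn (fun θ => (Real.sqrt (Wn n ω θ).det)⁻¹ * ‖θ - θstar‖ ^ p * pr θ) Θ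

/-- Assumption 4 of the paper: the set `Θ⋆` of roots of the limit score is finite, and
at least one root has its sandwich matrix with smallest eigenvalue in `(δ, 1/δ]`. -/
structure Assumption4 (Θ : Set (Vec d)) (m : Vec d → Vec d)
    (W H : Vec d → Mat d) : Prop where
  finite_roots : {θ | θ ∈ interior Θ ∧ m θ = 0}.Finite
  eigen : ∃ δ : ℝ, 0 < δ ∧ ∃ θ, θ ∈ interior Θ ∧ m θ = 0 ∧
    (∀ x : Vec d, x ≠ 0 → δ * ‖x‖ ^ 2 < quadForm (sandwich W H θ) x x) ∧
    ∃ x : Vec d, x ≠ 0 ∧ quadForm (sandwich W H θ) x x ≤ δ⁻¹ * ‖x‖ ^ 2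

/-- Assumption 5 of the paper: `θ_n` is a root of the sample score equations and is
consistent for `θ⋆`. -/
structure Assumption5 (P : ℕ → Measure Ω) (mbar : ℕ → Ω → Vec d → Vec d)
    (θn : ℕ → Ω → Vec d) (θstar : Vec d) : Prop where
  root : ∀ n ω, mbar n ω (θn n ω) = 0
  consistent : TendstoInProb P fun n ω => ‖θn n ω - θstar‖


/-!
With `z = √n m̄_n(θ⋆)`, `u = √n (θ - θ⋆)` and `w = √n m̄_n(θ) - z + H(θ⋆) u`, completing the
square against `B = W(θ⋆)⁻¹` writes `R_n(θ)` as a sum of quadratic forms, each carrying a small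
factor: `W_n(θ)⁻¹ - B` or `W_n(θ⋆)⁻¹ - B` (uniform convergence of `W_n`, continuity of `W` and of
matrix inversion), or `w`, which is at most `γ (1 + ‖u‖)` by stochastic equicontinuity of the
score and differentiability of `m` at `θ⋆`. As `z` is tight by the CLT, outside three events of
small probability `|R_n(θ)| ≤ C γ (1 + n ‖θ - θ⋆‖²)` on a fixed ball around `θ⋆`. Both claims
follow, the second because `n ‖θ - θ⋆‖² ≤ 1` when `‖θ - θ⋆‖ ≤ 1 / √n`.
-/

-- The entrywise sup norm on matrices matches the entrywise uniform convergence in Assumption 2.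
open scoped Matrix.Norms.Elementwise

section QuadForm

variable (A B : Mat d) (x y z : Vec d)

lemma quadForm_eq_dotProduct : quadForm A x y = x.ofLp ⬝ᵥ (A *ᵥ y.ofLp) := by
  simp [quadForm, dotProduct, mulVec, Finset.mul_sum, mul_assoc]

lemma ofLp_matCLM : (matCLM A x).ofLp = A *ᵥ x.ofLp := rfl

lemma quadForm_add_left : quadForm A (x + y) z = quadForm A x z + quadForm A y z := by
  simp [quadForm_eq_dotProduct, add_dotProduct]

lemma quadForm_sub_left : quadForm A (x - y) z = quadForm A x z - quadForm A y z := by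
  simp [quadForm_eq_dotProduct, sub_dotProduct]

lemma quadForm_add_right : quadForm A x (y + z) = quadForm A x y + quadForm A x z := by
  simp [quadForm_eq_dotProduct, mulVec_add, dotProduct_add]

lemma quadForm_sub_right : quadForm A x (y - z) = quadForm A x y - quadForm A x z := by
  simp [quadForm_eq_dotProduct, mulVec_sub, dotProduct_sub]

lemma quadForm_smul_smul (c : ℝ) : quadForm A (c • x) (c • x) = c ^ 2 * quadForm A x x := by
  simp [quadForm_eq_dotProduct, mulVec_smul, sq, mul_assoc]

lemma quadForm_sub_matrix : quadForm (A - B) x y = quadForm A x y - quadForm B x y := by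
  simp [quadForm_eq_dotProduct, sub_mulVec, dotProduct_sub]

lemma quadForm_transpose_mul : quadForm (Aᵀ * B) x y = quadForm B (matCLM A x) y := by
  simp [quadForm_eq_dotProduct, ofLp_matCLM, ← mulVec_mulVec, dotProduct_mulVec _ Aᵀ,
    vecMul_transpose]

lemma quadForm_mul : quadForm (B * A) x y = quadForm B x (matCLM A y) := by
  simp [quadForm_eq_dotProduct, ofLp_matCLM, ← mulVec_mulVec]

lemma abs_quadForm_le : |quadForm A x y| ≤ d ^ 2 * ‖A‖ * ‖x‖ * ‖y‖ := by
  have hentry (i j : Fin d) : |x i * A i j * y j| ≤ ‖A‖ * ‖x‖ * ‖y‖ := by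
    have hA : |A i j| ≤ ‖A‖ := norm_entry_le_entrywise_sup_norm A
    have hx : |x i| ≤ ‖x‖ := PiLp.norm_apply_le x i
    have hy : |y j| ≤ ‖y‖ := PiLp.norm_apply_le y j
    calc |x i * A i j * y j| = |A i j| * |x i| * |y j| := by rw [abs_mul, abs_mul]; ring
      _ ≤ ‖A‖ * ‖x‖ * ‖y‖ := by gcongr
  calc |quadForm A x y| ≤ ∑ i, ∑ j, |x i * A i j * y j| :=
        (Finset.abs_sum_le_sum_abs _ _).trans
          (Finset.sum_le_sum fun i _ => Finset.abs_sum_le_sum_abs _ _)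
    _ ≤ ∑ _i : Fin d, ∑ _j : Fin d, ‖A‖ * ‖x‖ * ‖y‖ :=
        Finset.sum_le_sum fun i _ => Finset.sum_le_sum fun j _ => hentry i j
    _ = d ^ 2 * ‖A‖ * ‖x‖ * ‖y‖ := by simp [sq, mul_assoc]

end QuadForm

lemma quadForm_comm_of_transpose_eq {B : Mat d} (hB : Bᵀ = B) (x y : Vec d) :
    quadForm B x y = quadForm B y x := by
  rw [quadForm_eq_dotProduct, quadForm_eq_dotProduct, dotProduct_mulVec, ← hB,
    vecMul_transpose, dotProduct_comm, hB]

lemma quadratic_expansion_eq {B : Mat d} (hB : Bᵀ = B) (Aθ Aₛ H : Mat d) (s z u : Vec d) :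
    -(1 / 2) * quadForm Aθ s s + (1 / 2) * quadForm Aₛ z z - quadForm (Hᵀ * B) u z
        + (1 / 2) * quadForm (Hᵀ * B * H) u u =
      -(1 / 2) * quadForm (Aθ - B) s s + (1 / 2) * quadForm (Aₛ - B) z z
        - quadForm B z (s - z + matCLM H u) + quadForm B (s - z + matCLM H u) (matCLM H u)
        - (1 / 2) * quadForm B (s - z + matCLM H u) (s - z + matCLM H u) := by
  have hsym := quadForm_comm_of_transpose_eq hB
  rw [quadForm_transpose_mul, Matrix.mul_assoc, quadForm_transpose_mul, quadForm_mul]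
  simp only [quadForm_sub_matrix, quadForm_add_left, quadForm_add_right, quadForm_sub_left,
    quadForm_sub_right, hsym z s, hsym (matCLM H u) s, hsym (matCLM H u) z]
  ring

lemma abs_quadForm_le_of_le {A : Mat d} {x y : Vec d} {a b c : ℝ} (hA : ‖A‖ ≤ a)
    (hx : ‖x‖ ≤ b) (hy : ‖y‖ ≤ c) : |quadForm A x y| ≤ d ^ 2 * a * b * c := by
  have ha : 0 ≤ a := (norm_nonneg A).trans hA
  have hb : 0 ≤ b := (norm_nonneg x).trans hx
  refine (abs_quadForm_le A x y).trans ?_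
  gcongr

lemma abs_quadratic_expansion_le {B : Mat d} (hB : Bᵀ = B) {Aθ Aₛ : Mat d} (H : Mat d)
    {s z u : Vec d} {γ M : ℝ} (hγ : 0 ≤ γ) (hγ1 : γ ≤ 1) (hz : ‖z‖ ≤ M)
    (hw : ‖s - z + matCLM H u‖ ≤ γ * (1 + ‖u‖)) (hAθ : ‖Aθ - B‖ ≤ γ) (hAₛ : ‖Aₛ - B‖ ≤ γ) :
    |-(1 / 2) * quadForm Aθ s s + (1 / 2) * quadForm Aₛ z z - quadForm (Hᵀ * B) u z
        + (1 / 2) * quadForm (Hᵀ * B * H) u u| ≤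
      γ * (d ^ 2 * (M + ‖matCLM H‖ + 1) * (M + ‖matCLM H‖ + 1 + 3 * ‖B‖)) * (1 + ‖u‖) ^ 2 := by
  rw [quadratic_expansion_eq hB]
  set w := s - z + matCLM H u
  set C := M + ‖matCLM H‖ + 1
  set U := 1 + ‖u‖
  have hM : 0 ≤ M := (norm_nonneg z).trans hz
  have hU : 1 ≤ U := le_add_of_nonneg_right (norm_nonneg u)
  have hC : 1 ≤ C := by have := norm_nonneg (matCLM H); linarith
  have hHu : ‖matCLM H u‖ ≤ ‖matCLM H‖ * ‖u‖ := (matCLM H).le_opNorm u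
  have hHu' : ‖matCLM H u‖ ≤ C * U := by nlinarith [norm_nonneg u, norm_nonneg (matCLM H)]
  have hz' : ‖z‖ ≤ C * U := by nlinarith [norm_nonneg (matCLM H)]
  have hw' : ‖w‖ ≤ C * U := by nlinarith
  have hs : ‖s‖ ≤ C * U := by
    have : s = z + w - matCLM H u := by simp only [w]; abel
    rw [this]
    have := norm_sub_le (z + w) (matCLM H u)
    have := norm_add_le z w
    nlinarith [norm_nonneg u, norm_nonneg (matCLM H)]
  have h₁ := abs_quadForm_le_of_le hAθ hs hs
  have h₂ := abs_quadForm_le_of_le hAₛ hz' hz'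
  have h₃ := abs_quadForm_le_of_le (le_refl ‖B‖) hz' hw
  have h₄ := abs_quadForm_le_of_le (le_refl ‖B‖) hw hHu'
  have h₅ := abs_quadForm_le_of_le (le_refl ‖B‖) hw hw'
  have hpos : 0 ≤ (d : ℝ) ^ 2 * ‖B‖ * (γ * U) * (C * U) := by positivity
  rw [abs_le] at *
  constructor <;> linarith

lemma abs_remainder_le {B : Mat d} (hB : Bᵀ = B) {Aθ Aₛ : Mat d} (H : Mat d) (n : ℕ)
    {a b ma mb t : Vec d} {γ M : ℝ} (hγ : 0 ≤ γ) (hγ1 : γ ≤ 1)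
    (hz : ‖Real.sqrt n • b‖ ≤ M)
    (hfluct : Real.sqrt n * ‖a - b - (ma - mb)‖ ≤ γ / 2 * (1 + Real.sqrt n * ‖t‖))
    (hlin : ‖ma - mb + matCLM H t‖ ≤ γ / 2 * ‖t‖)
    (hAθ : ‖Aθ - B‖ ≤ γ) (hAₛ : ‖Aₛ - B‖ ≤ γ) :
    |(-((n : ℝ) / 2) * quadForm Aθ a a - -((n : ℝ) / 2) * quadForm Aₛ b b) -
        quadForm (Hᵀ * B) (Real.sqrt n • t) (Real.sqrt n • b) +
        (1 / 2) * quadForm (Hᵀ * B * H) (Real.sqrt n • t) (Real.sqrt n • t)| ≤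
      2 * γ * (d ^ 2 * (M + ‖matCLM H‖ + 1) * (M + ‖matCLM H‖ + 1 + 3 * ‖B‖)) *
        (1 + n * ‖t‖ ^ 2) := by
  have hsqrt : 0 ≤ Real.sqrt n := Real.sqrt_nonneg n
  have hnorm_u : ‖Real.sqrt n • t‖ = Real.sqrt n * ‖t‖ := by
    rw [norm_smul, Real.norm_of_nonneg hsqrt]
  have hw : ‖Real.sqrt n • a - Real.sqrt n • b + matCLM H (Real.sqrt n • t)‖ ≤
      γ * (1 + ‖Real.sqrt n • t‖) := by
    have hsplit : Real.sqrt n • a - Real.sqrt n • b + matCLM H (Real.sqrt n • t) =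
        Real.sqrt n • ((a - b - (ma - mb)) + (ma - mb + matCLM H t)) := by
      rw [map_smul]; module
    rw [hsplit, norm_smul, Real.norm_of_nonneg hsqrt, hnorm_u]
    calc Real.sqrt n * ‖a - b - (ma - mb) + (ma - mb + matCLM H t)‖
        ≤ Real.sqrt n * ‖a - b - (ma - mb)‖ + Real.sqrt n * ‖ma - mb + matCLM H t‖ := by
          rw [← mul_add]; exact mul_le_mul_of_nonneg_left (norm_add_le _ _) hsqrt
      _ ≤ γ / 2 * (1 + Real.sqrt n * ‖t‖) + Real.sqrt n * (γ / 2 * ‖t‖) := by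
          gcongr
      _ ≤ γ * (1 + Real.sqrt n * ‖t‖) := by nlinarith [norm_nonneg t]
  have key := abs_quadratic_expansion_le hB H hγ hγ1 hz hw hAθ hAₛ
  have hn : (n : ℝ) = Real.sqrt n ^ 2 := (Real.sq_sqrt (Nat.cast_nonneg n)).symm
  rw [quadForm_smul_smul, quadForm_smul_smul, ← hn, hnorm_u] at key
  refine le_trans (le_of_eq (congrArg abs (by ring))) (key.trans ?_)
  have hK : 0 ≤ γ * (d ^ 2 * (M + ‖matCLM H‖ + 1) * (M + ‖matCLM H‖ + 1 + 3 * ‖B‖)) := by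
    have := (norm_nonneg _).trans hz
    positivity
  have hsq : (1 + Real.sqrt n * ‖t‖) ^ 2 ≤ 2 * (1 + n * ‖t‖ ^ 2) := by
    have hu2 : (Real.sqrt n * ‖t‖) ^ 2 = n * ‖t‖ ^ 2 := by rw [mul_pow, ← hn]
    nlinarith [sq_nonneg (1 - Real.sqrt n * ‖t‖)]
  nlinarith

lemma exists_abs_remainder_le {B : Mat d} (hB : Bᵀ = B) (H : Mat d) {M εR : ℝ} (hM : 0 ≤ M)
    (hεR : 0 < εR) :
    ∃ γ > 0, ∀ (n : ℕ) {Aθ Aₛ : Mat d} {a b ma mb t : Vec d}, ‖Real.sqrt n • b‖ ≤ M →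
      Real.sqrt n * ‖a - b - (ma - mb)‖ ≤ γ / 2 * (1 + Real.sqrt n * ‖t‖) →
      ‖ma - mb + matCLM H t‖ ≤ γ / 2 * ‖t‖ → ‖Aθ - B‖ ≤ γ → ‖Aₛ - B‖ ≤ γ →
      |(-((n : ℝ) / 2) * quadForm Aθ a a - -((n : ℝ) / 2) * quadForm Aₛ b b) -
        quadForm (Hᵀ * B) (Real.sqrt n • t) (Real.sqrt n • b) +
        (1 / 2) * quadForm (Hᵀ * B * H) (Real.sqrt n • t) (Real.sqrt n • t)| ≤
      εR * (1 + n * ‖t‖ ^ 2) := by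
  set K := (d : ℝ) ^ 2 * (M + ‖matCLM H‖ + 1) * (M + ‖matCLM H‖ + 1 + 3 * ‖B‖)
  have hK : 0 ≤ K := by positivity
  set γ := min 1 (εR / (2 * K + 1))
  have hγK : 2 * γ * K ≤ εR := by
    have := min_le_right 1 (εR / (2 * K + 1))
    rw [le_div_iff₀ (by positivity)] at this
    nlinarith
  refine ⟨γ, lt_min one_pos (by positivity), fun n _ _ _ _ _ _ _ hz hfluct hlin hAθ hAₛ => ?_⟩
  refine (abs_remainder_le hB H n (by positivity) (min_le_left _ _) hz hfluct hlin hAθ hAₛ).trans ?_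
  exact mul_le_mul_of_nonneg_right hγK (by positivity)

section Tightness

variable {E : Type*} [SeminormedAddCommGroup E]

def normCutoff (M : ℝ) : BoundedContinuousFunction E ℝ :=
  BoundedContinuousFunction.ofNormedAddCommGroup (fun x => max 0 (min 1 (‖x‖ - (M - 1))))
    (by fun_prop) 1 fun x => by
      rw [Real.norm_of_nonneg (le_max_left _ _)]
      exact max_le zero_le_one (min_le_left _ _)

lemma normCutoff_nonneg (M : ℝ) (x : E) : 0 ≤ normCutoff M x := le_max_left _ _

lemma normCutoff_le_one (M : ℝ) (x : E) : normCutoff M x ≤ 1 :=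
  max_le zero_le_one (min_le_left _ _)

lemma normCutoff_eq_one {M : ℝ} {x : E} (hx : M ≤ ‖x‖) : normCutoff M x = 1 := by
  simp only [normCutoff, BoundedContinuousFunction.coe_ofNormedAddCommGroup]
  rw [min_eq_left (by linarith), max_eq_right zero_le_one]

lemma normCutoff_eq_zero {M : ℝ} {x : E} (hx : ‖x‖ ≤ M - 1) : normCutoff M x = 0 := by
  simp only [normCutoff, BoundedContinuousFunction.coe_ofNormedAddCommGroup]
  exact max_eq_left ((min_le_right _ _).trans (by linarith))

lemma tendsto_integral_normCutoff [MeasurableSpace E] [OpensMeasurableSpace E]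
    (μ : Measure E) [IsFiniteMeasure μ] :
    Tendsto (fun M => ∫ x, normCutoff M x ∂μ) atTop (𝓝 0) := by
  rw [← integral_zero E ℝ]
  refine tendsto_integral_filter_of_dominated_convergence (fun _ => 1)
    (Eventually.of_forall fun M => (normCutoff M).continuous.aestronglyMeasurable)
    (Eventually.of_forall fun M => Eventually.of_forall fun x => ?_) (integrable_const 1)
    (Eventually.of_forall fun x => tendsto_const_nhds.congr' ?_)
  · rw [Real.norm_of_nonneg (normCutoff_nonneg M x)]
    exact normCutoff_le_one M x
  · filter_upwards [eventually_ge_atTop (‖x‖ + 1)] with M hM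
    exact (normCutoff_eq_zero (by linarith)).symm

end Tightness

namespace TendstoInDist

variable {P : ℕ → Measure Ω} {Z : ℕ → Ω → Vec d} {μ : Measure (Vec d)}

lemma isProbabilityMeasure [∀ n, IsProbabilityMeasure (P n)] (hZ : TendstoInDist P Z μ) :
    IsProbabilityMeasure μ := by
  have h := hZ (BoundedContinuousFunction.const (Vec d) 1)
  simp only [BoundedContinuousFunction.const_apply, integral_const, probReal_univ,
    smul_eq_mul, mul_one] at h
  have h1 : μ.real Set.univ = 1 := tendsto_nhds_unique h tendsto_const_nhds
  exact ⟨(ENNReal.toReal_eq_one_iff _).mp h1⟩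

lemma eventually_integrable (hZ : TendstoInDist P Z μ) (f : BoundedContinuousFunction (Vec d) ℝ)
    (hf : ∫ x, f x ∂μ ≠ 0) : ∀ᶠ n in atTop, Integrable (fun ω => f (Z n ω)) (P n) := by
  filter_upwards [(hZ f).eventually_ne hf] with n hn
  by_contra h
  exact hn (integral_undef h)

lemma exists_eventually_measure_norm_ge_le [∀ n, IsProbabilityMeasure (P n)]
    (hZ : TendstoInDist P Z μ) {α : ℝ} (hα : 0 < α) :
    ∃ M, 0 ≤ M ∧ ∀ᶠ n in atTop, P n {ω | M ≤ ‖Z n ω‖} ≤ ENNReal.ofReal α := by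
  have := hZ.isProbabilityMeasure
  obtain ⟨M, hM, hM0⟩ :=
    (((tendsto_integral_normCutoff μ).eventually_lt_const hα).and (eventually_ge_atTop 0)).exists
  refine ⟨M, hM0, ?_⟩
  -- `Z n` need not be measurable: `cutoff ∘ Z n` is integrable because the integrals of
  -- `1 + cutoff` tend to a limit `≥ 1`, so are eventually nonzero.
  set g : BoundedContinuousFunction (Vec d) ℝ :=
    BoundedContinuousFunction.const (Vec d) 1 + normCutoff M
  have hint : ∫ x, g x ∂μ ≠ 0 := by
    have h1 : 1 ≤ ∫ x, g x ∂μ :=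
      calc (1 : ℝ) = ∫ _, (1 : ℝ) ∂μ := by simp
        _ ≤ _ := integral_mono (integrable_const 1) (BoundedContinuousFunction.integrable μ _)
          fun x => by simp [g, normCutoff_nonneg]
    linarith
  filter_upwards [hZ.eventually_integrable _ hint, (hZ (normCutoff M)).eventually_lt_const hM]
    with n hn hlt
  have hcut : Integrable (fun ω => normCutoff M (Z n ω)) (P n) := by
    refine (hn.sub (integrable_const (1 : ℝ))).congr (Eventually.of_forall fun ω => ?_)
    simp [g]
  calc P n {ω | M ≤ ‖Z n ω‖} ≤ P n {ω | 1 ≤ normCutoff M (Z n ω)} :=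
        measure_mono fun ω hω => (normCutoff_eq_one hω).ge
    _ = ENNReal.ofReal ((P n).real {ω | 1 ≤ normCutoff M (Z n ω)}) := by
        rw [ofReal_measureReal]
    _ ≤ ENNReal.ofReal α := by
        refine ENNReal.ofReal_le_ofReal (le_trans ?_ hlt.le)
        simpa using mul_meas_ge_le_integral_of_nonneg
          (Eventually.of_forall fun ω => normCutoff_nonneg M _) hcut 1

end TendstoInDist

lemma measure_le_of_subset_union₃ {μ : Measure Ω} {S E₁ E₂ E₃ : Set Ω}
    (hS : S ⊆ E₁ ∪ E₂ ∪ E₃) {β : ℝ} (hβ : 0 ≤ β) (h₁ : μ E₁ ≤ ENNReal.ofReal (β / 3))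
    (h₂ : μ E₂ ≤ ENNReal.ofReal (β / 3)) (h₃ : μ E₃ ≤ ENNReal.ofReal (β / 3)) :
    μ S ≤ ENNReal.ofReal β :=
  calc μ S ≤ μ E₁ + μ E₂ + μ E₃ :=
        (measure_mono hS).trans
          ((measure_union_le _ _).trans (add_le_add_left (measure_union_le _ _) _))
    _ ≤ ENNReal.ofReal (β / 3) + ENNReal.ofReal (β / 3) + ENNReal.ofReal (β / 3) := by
        gcongr
    _ = ENNReal.ofReal β := by
        rw [← ENNReal.ofReal_add (by positivity) (by positivity),
          ← ENNReal.ofReal_add (by positivity) (by positivity)]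
        ring_nf

section Assumptions

variable {P : ℕ → Measure Ω} {Θ : Set (Vec d)} {mbar : ℕ → Ω → Vec d → Vec d}
  {m : Vec d → Vec d} {Wn : ℕ → Ω → Vec d → Mat d} {W H : Vec d → Mat d} {Istar : Mat d}
  {θstar : Vec d}

lemma Assumption1.eventually_norm_linearization_le
    (hA1 : Assumption1 P Θ mbar m θstar H Istar) {ρ : ℝ} (hρ : 0 < ρ) :
    ∀ᶠ θ in 𝓝 θstar, ‖m θ - m θstar + matCLM (H θstar) (θ - θstar)‖ ≤ ρ * ‖θ - θstar‖ := by
  obtain ⟨δ, hδ, hder, -⟩ := hA1.smooth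
  have hderiv := hder θstar (by simpa using hδ.le)
  filter_upwards [hderiv.isLittleO.def hρ] with θ hθ
  rwa [_root_.neg_apply, sub_neg_eq_add] at hθ

lemma Assumption2.posDef (hA2 : Assumption2 P Θ Wn W m θstar) : (W θstar).PosDef := by
  obtain ⟨δ, hδ, -, -, -, -, hpd⟩ := hA2.regular
  exact hpd θstar (by simpa using hδ.le)

lemma Assumption2.exists_norm_inv_sub_lt (hA2 : Assumption2 P Θ Wn W m θstar) {γ : ℝ}
    (hγ : 0 < γ) :
    ∃ η > 0, ∀ᶠ θ in 𝓝 θstar, ∀ A : Mat d, ‖A - W θ‖ < η → ‖A⁻¹ - (W θstar)⁻¹‖ < γ := by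
  obtain ⟨δ, hδ, -, -, -, hWcont, -⟩ := hA2.regular
  have hinv : ContinuousAt Inv.inv (W θstar) := by
    refine continuousAt_matrix_inv _ ?_
    rw [Ring.inverse_eq_inv']
    exact continuousAt_inv₀ hA2.posDef.det_pos.ne'
  obtain ⟨η, hη, hη'⟩ := Metric.continuousAt_iff.mp hinv γ hγ
  have hW : ContinuousAt W θstar :=
    hWcont.continuousAt (by simpa only [Metric.closedBall, dist_eq_norm] using
      Metric.closedBall_mem_nhds θstar hδ)
  refine ⟨η / 2, half_pos hη, ?_⟩
  filter_upwards [Metric.continuousAt_iff'.mp hW (η / 2) (half_pos hη)] with θ hθ A hA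
  rw [← dist_eq_norm]
  refine hη' ?_
  rw [dist_eq_norm] at hθ ⊢
  calc ‖A - W θstar‖ ≤ ‖A - W θ‖ + ‖W θ - W θstar‖ := norm_sub_le_norm_sub_add_norm_sub _ _ _
    _ < η := by linarith

lemma exists_radius_linearization_inv_near
    (hA1 : Assumption1 P Θ mbar m θstar H Istar) (hA2 : Assumption2 P Θ Wn W m θstar)
    {γ : ℝ} (hγ : 0 < γ) :
    ∃ η > 0, ∃ r > 0, ∀ θ, ‖θ - θstar‖ < r → θ ∈ Θ ∧
      ‖m θ - m θstar + matCLM (H θstar) (θ - θstar)‖ ≤ γ / 2 * ‖θ - θstar‖ ∧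
      ∀ A : Mat d, ‖A - W θ‖ < η → ‖A⁻¹ - (W θstar)⁻¹‖ < γ := by
  obtain ⟨η, hη, hinv⟩ := hA2.exists_norm_inv_sub_lt hγ
  have hΘ : ∀ᶠ θ in 𝓝 θstar, θ ∈ Θ := mem_interior_iff_mem_nhds.mp hA1.mem_interior
  obtain ⟨r, hr, hball⟩ := Metric.eventually_nhds_iff.mp
    (hΘ.and ((hA1.eventually_norm_linearization_le (half_pos hγ)).and hinv))
  exact ⟨η, hη, r, hr, fun θ hθ => hball (by rwa [dist_eq_norm])⟩

lemma eventually_measure_remainder_gt_le [∀ n, IsProbabilityMeasure (P n)]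
    (hA1 : Assumption1 P Θ mbar m θstar H Istar)
    (hA2 : Assumption2 P Θ Wn W m θstar)
    {Rn : ℕ → Ω → Vec d → ℝ}
    (hRn : ∀ n ω θ, Rn n ω θ =
      (-((n : ℝ) / 2) * quadForm (Wn n ω θ)⁻¹ (mbar n ω θ) (mbar n ω θ) -
        -((n : ℝ) / 2) * quadForm (Wn n ω θstar)⁻¹ (mbar n ω θstar) (mbar n ω θstar)) -
      quadForm ((H θstar)ᵀ * (W θstar)⁻¹) (Real.sqrt n • (θ - θstar))
        (Real.sqrt n • mbar n ω θstar) +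
      (1 / 2) * quadForm (sandwich W H θstar) (Real.sqrt n • (θ - θstar))
        (Real.sqrt n • (θ - θstar)))
    {εR β : ℝ} (hεR : 0 < εR) (hβ : 0 < β) :
    ∃ r > 0, ∀ᶠ n in atTop, P n {ω | ∃ θ, ‖θ - θstar‖ ≤ r ∧
      εR * (1 + n * ‖θ - θstar‖ ^ 2) < |Rn n ω θ|} ≤ ENNReal.ofReal β := by
  have hB : ((W θstar)⁻¹)ᵀ = (W θstar)⁻¹ := by
    rw [← conjTranspose_eq_transpose_of_trivial]
    exact hA2.posDef.isHermitian.inv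
  obtain ⟨M, hM0, hM⟩ := hA1.clt.exists_eventually_measure_norm_ge_le (by positivity : 0 < β / 3)
  obtain ⟨γ, hγ, hrem⟩ := exists_abs_remainder_le hB (H θstar) hM0 hεR
  obtain ⟨η, hη, r, hr, hnear⟩ := exists_radius_linearization_inv_near hA1 hA2 hγ
  obtain ⟨δe, hδe, hequi⟩ := hA1.equicont (min (γ / 2) (β / 3)) (by positivity)
  obtain ⟨-, -, -, -, hWconv, -, -⟩ := hA2.regular
  refine ⟨min r δe / 2, by positivity, ?_⟩
  filter_upwards [hM, eventually_lt_of_limsup_lt hequi,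
    (hWconv η hη).eventually_lt_const (ENNReal.ofReal_pos.mpr (by positivity : 0 < β / 3))]
    with n hMn hEn hWn
  refine measure_le_of_subset_union₃ ?_ hβ.le
    (hEn.le.trans (ENNReal.ofReal_le_ofReal (min_le_right _ _))) hWn.le hMn
  rintro ω ⟨θ, hθr, hR⟩
  by_contra hgood
  simp only [Set.mem_union, Set.mem_ofPred_eq, not_or, not_exists, not_and, not_le] at hgood
  obtain ⟨⟨hfluct, hWent⟩, hz⟩ := hgood
  have hθ : ‖θ - θstar‖ < min r δe := by linarith [lt_min hr hδe]
  obtain ⟨hθΘ, hlin, hinvθ⟩ := hnear θ (hθ.trans_le (min_le_left _ _))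
  obtain ⟨hθsΘ, -, hinvs⟩ := hnear θstar (by simpa using hr)
  have hWnear : ∀ ϑ ∈ Θ, ‖Wn n ω ϑ - W ϑ‖ < η := fun ϑ hϑ =>
    (norm_lt_iff hη).mpr fun i j => hWent ϑ hϑ i j
  have hfluctθ := hfluct θ (hθ.trans_le (min_le_right _ _))
  rw [div_lt_iff₀ (by positivity)] at hfluctθ
  have hRle : |Rn n ω θ| ≤ εR * (1 + n * ‖θ - θstar‖ ^ 2) := by
    rw [hRn]
    exact hrem n hz.le
      (hfluctθ.le.trans (mul_le_mul_of_nonneg_right (min_le_left _ _) (by positivity))) hlin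
      (hinvθ _ (hWnear θ hθΘ)).le (hinvs _ (hWnear θstar hθsΘ)).le
  linarith

end Assumptions

lemma limsup_eq_zero_of_forall_eventually_le {u : ℕ → ℝ≥0∞}
    (h : ∀ β > 0, ∀ᶠ n in atTop, u n ≤ ENNReal.ofReal β) : limsup u atTop = 0 := by
  refine le_antisymm (ENNReal.le_of_forall_pos_le_add fun β hβ _ => ?_) zero_le
  rw [zero_add, ← ENNReal.ofReal_coe_nnreal]
  exact limsup_le_of_le (by isBoundedDefault) (h β hβ)

lemma nat_mul_sq_le_one {n : ℕ} {x : ℝ} (hx : 0 ≤ x) (hxn : x ≤ 1 / Real.sqrt n) :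
    n * x ^ 2 ≤ 1 := by
  have h : Real.sqrt n * x ≤ 1 :=
    calc Real.sqrt n * x ≤ Real.sqrt n * (1 / Real.sqrt n) := by gcongr
      _ ≤ 1 := by rw [mul_one_div]; exact div_self_le_one _
  calc (n : ℝ) * x ^ 2 = (Real.sqrt n * x) ^ 2 := by
        rw [mul_pow, Real.sq_sqrt (Nat.cast_nonneg n)]
    _ ≤ 1 := pow_le_one₀ (by positivity) h

theorem statement6_general
    {d : ℕ} {Ω : Type*} [MeasurableSpace Ω]
    (P : ℕ → Measure Ω) [∀ n, IsProbabilityMeasure (P n)]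
    (Θ : Set (Vec d)) (mbar : ℕ → Ω → Vec d → Vec d) (m : Vec d → Vec d)
    (Wn : ℕ → Ω → Vec d → Mat d) (W : Vec d → Mat d)
    (H : Vec d → Mat d) (Istar : Mat d) (θstar : Vec d)
    (hA1 : Assumption1 P Θ mbar m θstar H Istar)
    (hA2 : Assumption2 P Θ Wn W m θstar)
    (Rn : ℕ → Ω → Vec d → ℝ)
    (hRn : ∀ n ω θ, Rn n ω θ =
      (-((n : ℝ) / 2) * quadForm (Wn n ω θ)⁻¹ (mbar n ω θ) (mbar n ω θ) -
        -((n : ℝ) / 2) * quadForm (Wn n ω θstar)⁻¹ (mbar n ω θstar) (mbar n ω θstar)) -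
      quadForm ((H θstar)ᵀ * (W θstar)⁻¹) (Real.sqrt n • (θ - θstar))
        (Real.sqrt n • mbar n ω θstar) +
      (1 / 2) * quadForm (sandwich W H θstar) (Real.sqrt n • (θ - θstar))
        (Real.sqrt n • (θ - θstar))) :
    ∀ ε : ℝ, 0 < ε → ∃ δ : ℝ, 0 < δ ∧ ∃ h : ℝ, 0 < h ∧
      limsup (fun n => P n {ω | ∃ θ : Vec d,
          h / Real.sqrt n ≤ ‖θ - θstar‖ ∧ ‖θ - θstar‖ ≤ δ ∧
          ε < |Rn n ω θ| / (1 + (n : ℝ) * ‖θ - θstar‖ ^ 2)}) atTop < ENNReal.ofReal ε ∧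
      limsup (fun n => P n {ω | ∃ θ : Vec d,
          ‖θ - θstar‖ ≤ h / Real.sqrt n ∧ ε < |Rn n ω θ|}) atTop = 0 := by
  intro ε hε
  obtain ⟨r, hr, hfar⟩ :=
    eventually_measure_remainder_gt_le hA1 hA2 hRn (half_pos hε) (half_pos hε)
  refine ⟨r, hr, 1, one_pos, ?_, ?_⟩
  · refine (limsup_le_of_le (by isBoundedDefault) (hfar.mono fun n hn => ?_)).trans_lt
      ((ENNReal.ofReal_lt_ofReal_iff hε).mpr (half_lt_self hε))
    refine (measure_mono ?_).trans hn
    rintro ω ⟨θ, -, hθr, hR⟩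
    rw [lt_div_iff₀ (by positivity)] at hR
    have : (0 : ℝ) ≤ n * ‖θ - θstar‖ ^ 2 := by positivity
    exact ⟨θ, hθr, by nlinarith⟩
  · refine limsup_eq_zero_of_forall_eventually_le fun β hβ => ?_
    obtain ⟨r', hr', hnear⟩ := eventually_measure_remainder_gt_le hA1 hA2 hRn (half_pos hε) hβ
    have hshrink : Tendsto (fun n : ℕ => 1 / Real.sqrt n) atTop (𝓝 0) := by
      simpa only [one_div, Function.comp_def] using tendsto_inv_atTop_zero.comp
        (Real.tendsto_sqrt_atTop.comp tendsto_natCast_atTop_atTop)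
    filter_upwards [hnear, hshrink.eventually_le_const hr'] with n hn hsmall
    refine (measure_mono ?_).trans hn
    rintro ω ⟨θ, hθ, hR⟩
    have := nat_mul_sq_le_one (norm_nonneg _) hθ
    exact ⟨θ, hθ.trans hsmall, by nlinarith⟩

/-- **Lemma 3 of the paper.** Under Assumptions 1, 2 and 5, the remainder `R_n(θ)` of the
quadratic expansion of `Q_n(θ) = -(n/2) m̄_n(θ)ᵀ W_n(θ)⁻¹ m̄_n(θ)` around `θ⋆`, namely
`R_n(θ) = Q_n(θ) - Q_n(θ⋆) - √n(θ-θ⋆)ᵀ H(θ⋆)ᵀ W(θ⋆)⁻¹ √n m̄_n(θ⋆)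
  + (1/2) √n(θ-θ⋆)ᵀ Δ(θ⋆) √n(θ-θ⋆)`,
satisfies: for each `ε > 0` there are `δ > 0` small and `h > 0` large with
`limsup_n P₀( sup_{h/√n ≤ ‖θ-θ⋆‖ ≤ δ} |R_n(θ)|/(1+n‖θ-θ⋆‖²) > ε ) < ε` and
`limsup_n P₀( sup_{‖θ-θ⋆‖ ≤ h/√n} |R_n(θ)| > ε ) = 0`. -/
theorem statement6
    {d : ℕ} {Ω : Type*} [MeasurableSpace Ω]
    (P : ℕ → Measure Ω) [∀ n, IsProbabilityMeasure (P n)]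
    (Θ : Set (Vec d)) (mbar : ℕ → Ω → Vec d → Vec d) (m : Vec d → Vec d)
    (Wn : ℕ → Ω → Vec d → Mat d) (W : Vec d → Mat d)
    (H : Vec d → Mat d) (Istar : Mat d) (θstar : Vec d)
    (θn : ℕ → Ω → Vec d)
    (hA1 : Assumption1 P Θ mbar m θstar H Istar)
    (hA2 : Assumption2 P Θ Wn W m θstar)
    (hA5 : Assumption5 P mbar θn θstar)
    (Rn : ℕ → Ω → Vec d → ℝ)
    (hRn : ∀ n ω θ, Rn n ω θ =
      (-((n : ℝ) / 2) * quadForm (Wn n ω θ)⁻¹ (mbar n ω θ) (mbar n ω θ) -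
        -((n : ℝ) / 2) * quadForm (Wn n ω θstar)⁻¹ (mbar n ω θstar) (mbar n ω θstar)) -
      quadForm ((H θstar)ᵀ * (W θstar)⁻¹) (Real.sqrt n • (θ - θstar))
        (Real.sqrt n • mbar n ω θstar) +
      (1 / 2) * quadForm (sandwich W H θstar) (Real.sqrt n • (θ - θstar))
        (Real.sqrt n • (θ - θstar))) :
    ∀ ε : ℝ, 0 < ε → ∃ δ : ℝ, 0 < δ ∧ ∃ h : ℝ, 0 < h ∧
      limsup (fun n => P n {ω | ∃ θ : Vec d,
          h / Real.sqrt n ≤ ‖θ - θstar‖ ∧ ‖θ - θstar‖ ≤ δ ∧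
          ε < |Rn n ω θ| / (1 + (n : ℝ) * ‖θ - θstar‖ ^ 2)}) atTop < ENNReal.ofReal ε ∧
      limsup (fun n => P n {ω | ∃ θ : Vec d,
          ‖θ - θstar‖ ≤ h / Real.sqrt n ∧ ε < |Rn n ω θ|}) atTop = 0 :=
  statement6_general P Θ mbar m Wn W H Istar θstar hA1 hA2 Rn hRn

end QPaper
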